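/- arXiv:2004.12774 — 2 statements merged into one kernel-verified Lean document; each statement's English description precedes it below -/
import Mathlib

section
/- Let λ be a real number. If some derivation of the 3-dimensional Heisenberg Lie algebra h₃ has characteristic polynomial X(X − 1)(X − λ), then λ = 1 or λ = −1. -/
/-!
A derivation `D` of `h₃` preserves the derived algebra `ℝ e₃`, and the Leibniz rule applied to
`e₃ = ⁅e₁, e₂⁆` shows that it acts there by `D₁₁ + D₂₂`, which is half the trace of `D`.
If the characteristic polynomial is `X (X - 1) (X - λ)`, the trace is `1 + λ`, so `(1 + λ) / 2`
must be one of `0, 1, λ`; each case gives `λ = ±1`.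
-/

set_option linter.unusedTactic false
set_option linter.unnecessarySeqFocus false
set_option linter.unreachableTactic false

open Polynomial

/-- The 3-dimensional Heisenberg Lie algebra `h₃`: the real vector space `Fin 3 → ℝ`
with basis `e₁, e₂, e₃` and only nonzero bracket `⁅e₁, e₂⁆ = e₃`. -/
def H3 : Type := Fin 3 → ℝ

noncomputable instance : AddCommGroup H3 := Pi.addCommGroup
noncomputable instance : Module ℝ H3 := Pi.module _ _ _
instance : FiniteDimensional ℝ H3 := inferInstanceAs (FiniteDimensional ℝ (Fin 3 → ℝ))

lemma H3.add_apply (x y : H3) (i : Fin 3) : (x + y) i = x i + y i := rfl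
lemma H3.smul_apply (r : ℝ) (x : H3) (i : Fin 3) : (r • x) i = r * x i := rfl

noncomputable instance : LieRing H3 :=
  { (inferInstance : AddCommGroup H3) with
    bracket := fun x y => ![0, 0, x 0 * y 1 - x 1 * y 0]
    add_lie := by
      intro x y z
      show (![_,_,_] : Fin 3 → ℝ) = (![_,_,_] : Fin 3 → ℝ) + (![_,_,_] : Fin 3 → ℝ)
      funext i
      fin_cases i <;> simp [H3.add_apply] <;> ring
    lie_add := by
      intro x y z
      show (![_,_,_] : Fin 3 → ℝ) = (![_,_,_] : Fin 3 → ℝ) + (![_,_,_] : Fin 3 → ℝ)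
      funext i
      fin_cases i <;> simp [H3.add_apply] <;> ring
    lie_self := by
      intro x
      show (![_,_,_] : Fin 3 → ℝ) = 0
      funext i
      fin_cases i <;> simp <;> ring
    leibniz_lie := by
      intro x y z
      show (![_,_,_] : Fin 3 → ℝ) = (![_,_,_] : Fin 3 → ℝ) + (![_,_,_] : Fin 3 → ℝ)
      funext i
      fin_cases i <;> simp [H3.add_apply] <;> ring }

noncomputable instance : LieAlgebra ℝ H3 :=
  { lie_smul := by
      intro r x y
      show (![_,_,_] : Fin 3 → ℝ) = r • (![_,_,_] : Fin 3 → ℝ)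
      funext i
      fin_cases i <;> simp [H3.smul_apply] <;> ring }

lemma LinearMap.trace_eq_neg_nextCoeff_charpoly {R M : Type*} [CommRing R] [AddCommGroup M]
    [Module R M] [Module.Free R M] [Module.Finite R M] (f : M →ₗ[R] M) :
    LinearMap.trace R M f = -f.charpoly.nextCoeff := by
  rw [LinearMap.trace_eq_matrix_trace R (Module.Free.chooseBasis R M),
    Matrix.trace_eq_neg_charpoly_nextCoeff, LinearMap.charpoly_toMatrix]

lemma nextCoeff_X_mul_X_sub_one_mul_X_sub_C {R : Type*} [CommRing R] (c : R) :
    (X * (X - 1) * (X - C c)).nextCoeff = -(1 + c) := by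
  have hX : (X : R[X]).nextCoeff = 0 := by
    nontriviality R
    simp [nextCoeff]
  rw [← C_1, Monic.nextCoeff_mul (monic_X.mul (monic_X_sub_C 1)) (monic_X_sub_C c),
    Monic.nextCoeff_mul monic_X (monic_X_sub_C 1), nextCoeff_X_sub_C, nextCoeff_X_sub_C, hX]
  ring

lemma eq_one_or_eq_neg_one_of_isRoot_half_one_add {c : ℝ}
    (h : (X * (X - 1) * (X - C c)).IsRoot ((1 + c) / 2)) : c = 1 ∨ c = -1 := by
  have hprod : (1 + c) * ((c - 1) * (c - 1)) = 0 := by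
    simp only [IsRoot, eval_mul, eval_sub, eval_X, eval_one, eval_C] at h
    linear_combination -8 * h
  rcases mul_eq_zero.1 hprod with hc | hc
  · exact Or.inr (by linarith)
  · exact Or.inl (by linarith [mul_self_eq_zero.1 hc])

namespace H3

lemma lie_def (x y : H3) : ⁅x, y⁆ = ![0, 0, x 0 * y 1 - x 1 * y 0] := rfl

noncomputable def stdBasis : Module.Basis (Fin 3) ℝ H3 := Pi.basisFun ℝ (Fin 3)

lemma stdBasis_apply (j i : Fin 3) : stdBasis j i = if i = j then 1 else 0 := by
  show (Pi.basisFun ℝ (Fin 3) j : Fin 3 → ℝ) i = _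
  rw [Pi.basisFun_apply, Pi.single_apply]

lemma stdBasis_repr (x : H3) (i : Fin 3) : stdBasis.repr x i = x i :=
  Pi.basisFun_repr ℝ (Fin 3) x i

lemma lie_stdBasis_zero_stdBasis_one : ⁅stdBasis 0, stdBasis 1⁆ = stdBasis 2 := by
  funext i; fin_cases i <;> simp [lie_def, stdBasis_apply]

lemma lie_stdBasis_zero (x : H3) : ⁅stdBasis 0, x⁆ = x 1 • stdBasis 2 := by
  funext i; fin_cases i <;> simp [lie_def, stdBasis_apply, smul_apply]

lemma lie_stdBasis_one (x : H3) : ⁅x, stdBasis 1⁆ = x 0 • stdBasis 2 := by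
  funext i; fin_cases i <;> simp [lie_def, stdBasis_apply, smul_apply]

lemma derivation_apply_stdBasis_two (D : LieDerivation ℝ H3 H3) :
    D (stdBasis 2) = (D (stdBasis 0) 0 + D (stdBasis 1) 1) • stdBasis 2 := by
  have leibniz := D.apply_lie_eq_add (stdBasis 0) (stdBasis 1)
  rwa [lie_stdBasis_zero_stdBasis_one, lie_stdBasis_zero, lie_stdBasis_one, add_comm, ← add_smul]
    at leibniz

lemma trace_derivation (D : LieDerivation ℝ H3 H3) :
    LinearMap.trace ℝ H3 D = 2 * (D (stdBasis 0) 0 + D (stdBasis 1) 1) := by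
  rw [LinearMap.trace_eq_matrix_trace ℝ stdBasis, Matrix.trace_fin_three]
  simp only [LinearMap.toMatrix_apply, stdBasis_repr, LieDerivation.coeFn_coe,
    derivation_apply_stdBasis_two, smul_apply, stdBasis_apply, ↓reduceIte, mul_one]
  ring

lemma hasEigenvalue_half_trace_derivation (D : LieDerivation ℝ H3 H3) :
    Module.End.HasEigenvalue D.toLinearMap (LinearMap.trace ℝ H3 D / 2) := by
  refine Module.End.hasEigenvalue_of_hasEigenvector (x := stdBasis 2) ⟨?_, stdBasis.ne_zero 2⟩
  rw [Module.End.mem_eigenspace_iff, trace_derivation, LieDerivation.coeFn_coe,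
    derivation_apply_stdBasis_two, mul_div_cancel_left₀ _ two_ne_zero]

end H3

/-- If some derivation of `h₃` has characteristic polynomial `X * (X - 1) * (X - λ)`,
then `λ = 1` or `λ = -1`. -/
theorem eq_one_or_neg_one_of_charpoly_derivation_heisenberg (lam : ℝ)
    (h : ∃ D : LieDerivation ℝ H3 H3,
      LinearMap.charpoly D.toLinearMap = X * (X - 1) * (X - C lam)) :
    lam = 1 ∨ lam = -1 := by
  obtain ⟨D, hD⟩ := h
  have htrace : LinearMap.trace ℝ H3 D = 1 + lam := by
    rw [LinearMap.trace_eq_neg_nextCoeff_charpoly, hD, nextCoeff_X_mul_X_sub_one_mul_X_sub_C,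
      neg_neg]
  have hroot := (Module.End.hasEigenvalue_iff_isRoot_charpoly _ _).1
    (H3.hasEigenvalue_half_trace_derivation D)
  rw [hD, htrace] at hroot
  exact eq_one_or_eq_neg_one_of_isRoot_half_one_add hroot
end

section
/- Let λ be a real number. If some derivation of the filiform Lie algebra n₄ has characteristic polynomial X(X − 1)(X − λ)(X − (1 − λ)), then λ ∈ {−1, 1/2, 2}. -/
/-!
The Leibniz rule applied to `⁅e₁, e₂⁆ = e₃`, `⁅e₁, e₃⁆ = e₄` and `⁅e₂, e₃⁆ = 0` shows that every
derivation of `n₄` is lower triangular in the basis `e₁, …, e₄`, with diagonal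
`a, p, a + p, 2a + p`. Matching this spectrum with `0, 1, λ, 1 - λ`, the traces give
`4a + 3p = 2` and one of the four eigenvalues must vanish; each of the four cases fixes `(a, p)`,
and only `(1/2, 0)` and `(-1, 2)` are consistent, forcing `λ = 1/2` and `λ ∈ {-1, 2}` respectively.
-/

set_option linter.unusedTactic false
set_option linter.unnecessarySeqFocus false
set_option linter.unreachableTactic false

open Polynomial

/-- The 4-dimensional filiform Lie algebra `n₄`: the real vector space `Fin 4 → ℝ` with
basis `e₁, e₂, e₃, e₄` and only nonzero brackets `⁅e₁, e₂⁆ = e₃` and `⁅e₁, e₃⁆ = e₄`. -/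
def N4 : Type := Fin 4 → ℝ

noncomputable instance : AddCommGroup N4 := Pi.addCommGroup
noncomputable instance : Module ℝ N4 := Pi.module _ _ _
instance : FiniteDimensional ℝ N4 := inferInstanceAs (FiniteDimensional ℝ (Fin 4 → ℝ))

lemma N4.add_apply (x y : N4) (i : Fin 4) : (x + y) i = x i + y i := rfl
lemma N4.smul_apply (r : ℝ) (x : N4) (i : Fin 4) : (r • x) i = r * x i := rfl

noncomputable instance : LieRing N4 :=
  { (inferInstance : AddCommGroup N4) with
    bracket := fun x y => ![0, 0, x 0 * y 1 - x 1 * y 0, x 0 * y 2 - x 2 * y 0]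
    add_lie := by
      intro x y z
      show (![_,_,_,_] : Fin 4 → ℝ) = (![_,_,_,_] : Fin 4 → ℝ) + (![_,_,_,_] : Fin 4 → ℝ)
      funext i
      fin_cases i <;> simp [N4.add_apply] <;> ring
    lie_add := by
      intro x y z
      show (![_,_,_,_] : Fin 4 → ℝ) = (![_,_,_,_] : Fin 4 → ℝ) + (![_,_,_,_] : Fin 4 → ℝ)
      funext i
      fin_cases i <;> simp [N4.add_apply] <;> ring
    lie_self := by
      intro x
      show (![_,_,_,_] : Fin 4 → ℝ) = 0
      funext i
      fin_cases i <;> simp <;> ring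
    leibniz_lie := by
      intro x y z
      show (![_,_,_,_] : Fin 4 → ℝ) = (![_,_,_,_] : Fin 4 → ℝ) + (![_,_,_,_] : Fin 4 → ℝ)
      funext i
      fin_cases i <;> simp [N4.add_apply] <;> ring }

noncomputable instance : LieAlgebra ℝ N4 :=
  { lie_smul := by
      intro r x y
      show (![_,_,_,_] : Fin 4 → ℝ) = r • (![_,_,_,_] : Fin 4 → ℝ)
      funext i
      fin_cases i <;> simp [N4.smul_apply] <;> ring }

theorem Matrix.charpoly_of_isLowerTriangular {R n : Type*} [CommRing R] [Fintype n] [DecidableEq n]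
    [LinearOrder n] (M : Matrix n n R) (h : M.IsLowerTriangular) :
    M.charpoly = ∏ i : n, (X - C (M i i)) := by
  rw [← M.charpoly_transpose, M.transpose.charpoly_of_isUpperTriangular fun i j hij => h hij]
  rfl

theorem LinearMap.charpoly_eq_prod_of_isLowerTriangular {R M ι : Type*} [CommRing R]
    [AddCommGroup M] [Module R M] [Module.Free R M] [Module.Finite R M] [Fintype ι]
    [DecidableEq ι] [LinearOrder ι] (b : Module.Basis ι R M) (f : M →ₗ[R] M)
    (h : (LinearMap.toMatrix b b f).IsLowerTriangular) :
    f.charpoly = ∏ i : ι, (X - C (b.repr (f (b i)) i)) := by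
  rw [← LinearMap.charpoly_toMatrix f b, Matrix.charpoly_of_isLowerTriangular _ h]
  simp only [LinearMap.toMatrix_apply]

namespace N4

-- Indices start at `0`: `e j` is the basis vector written `e_{j+1}` above.
noncomputable def e (j : Fin 4) : N4 := Pi.single j 1

noncomputable def basis : Module.Basis (Fin 4) ℝ N4 := Pi.basisFun ℝ (Fin 4)

@[simp] theorem e_apply (j i : Fin 4) : e j i = if i = j then 1 else 0 := Pi.single_apply j 1 i

theorem basis_apply (j : Fin 4) : basis j = e j := Pi.basisFun_apply ℝ (Fin 4) j

theorem basis_repr (x : N4) (i : Fin 4) : basis.repr x i = x i := rfl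

@[ext]
theorem ext {x y : N4} (h₀ : x 0 = y 0) (h₁ : x 1 = y 1) (h₂ : x 2 = y 2) (h₃ : x 3 = y 3) :
    x = y := by
  funext i
  fin_cases i
  exacts [h₀, h₁, h₂, h₃]

section lie_apply

variable (x y : N4)

@[simp] theorem lie_apply_zero : (⁅x, y⁆ : N4) 0 = 0 := rfl
@[simp] theorem lie_apply_one : (⁅x, y⁆ : N4) 1 = 0 := rfl
@[simp] theorem lie_apply_two : (⁅x, y⁆ : N4) 2 = x 0 * y 1 - x 1 * y 0 := rfl
@[simp] theorem lie_apply_three : (⁅x, y⁆ : N4) 3 = x 0 * y 2 - x 2 * y 0 := rfl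

end lie_apply

@[simp] theorem zero_apply (i : Fin 4) : (0 : N4) i = 0 := rfl

theorem lie_e_zero_e_one : ⁅e 0, e 1⁆ = e 2 := by
  ext <;> simp

theorem lie_e_zero_e_two : ⁅e 0, e 2⁆ = e 3 := by
  ext <;> simp

theorem lie_e_one_e_two : ⁅e 1, e 2⁆ = 0 := by
  ext <;> simp

variable (D : LieDerivation ℝ N4 N4)

theorem derivation_e_one_zero : D (e 1) 0 = 0 := by
  have h := congrFun (D.apply_lie_eq_add (e 1) (e 2)) 3
  simpa [lie_e_one_e_two, add_apply] using h.symm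

theorem derivation_e_two : D (e 2) = ![0, 0, D (e 0) 0 + D (e 1) 1, D (e 1) 2] := by
  rw [← lie_e_zero_e_one, D.apply_lie_eq_add]
  ext <;> simp [add_apply]
  ring

theorem derivation_e_three : D (e 3) = ![0, 0, 0, 2 * D (e 0) 0 + D (e 1) 1] := by
  rw [← lie_e_zero_e_two, D.apply_lie_eq_add]
  ext <;> simp only [lie_apply_zero, lie_apply_one, lie_apply_two, lie_apply_three, add_apply] <;>
    simp [derivation_e_two]
  ring

theorem isLowerTriangular_toMatrix_derivation :
    (LinearMap.toMatrix basis basis D.toLinearMap).IsLowerTriangular := by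
  intro i j hij
  rw [OrderDual.toDual_lt_toDual] at hij
  rw [LinearMap.toMatrix_apply, basis_apply, basis_repr]
  fin_cases i <;> fin_cases j <;> simp at hij <;>
    simp [derivation_e_one_zero, derivation_e_two, derivation_e_three]

theorem charpoly_derivation :
    D.toLinearMap.charpoly = (X - C (D (e 0) 0)) * (X - C (D (e 1) 1)) *
      (X - C (D (e 0) 0 + D (e 1) 1)) * (X - C (2 * D (e 0) 0 + D (e 1) 1)) := by
  rw [LinearMap.charpoly_eq_prod_of_isLowerTriangular basis _
    (isLowerTriangular_toMatrix_derivation D), Fin.prod_univ_four]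
  simp only [LieDerivation.coeFn_coe, basis_apply, basis_repr]
  rw [derivation_e_two, derivation_e_three]
  rfl

end N4

theorem eq_neg_one_or_eq_half_or_eq_two_of_charpoly_eq {a p lam : ℝ}
    (h : (X - C a) * (X - C p) * (X - C (a + p)) * (X - C (2 * a + p)) =
      X * (X - 1) * (X - C lam) * (X - C (1 - lam))) :
    lam = -1 ∨ lam = 1 / 2 ∨ lam = 2 := by
  have eval_eq (t : ℝ) : (t - a) * (t - p) * (t - (a + p)) * (t - (2 * a + p)) =
      t * (t - 1) * (t - lam) * (t - (1 - lam)) := by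
    simpa using congrArg (eval t) h
  have trace : 4 * a + 3 * p = 2 := by
    linear_combination
      (1 / 6) * eval_eq (-1) - (1 / 2) * eval_eq 0 + (1 / 2) * eval_eq 1 - (1 / 6) * eval_eq 2
  have det : a * p * (a + p) * (2 * a + p) = 0 := by linear_combination eval_eq 0
  simp only [mul_eq_zero] at det
  rcases det with ((ha | hp) | hap) | h2ap
  · subst ha
    obtain rfl : p = 2 / 3 := by linarith
    have := eval_eq 1
    norm_num at this
  · subst hp
    obtain rfl : a = 1 / 2 := by linarith
    have h2 := eval_eq 2
    norm_num at h2
    have : (lam - 1 / 2) ^ 2 = 0 := by linear_combination h2 / 2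
    right; left; linarith [pow_eq_zero_iff (n := 2) two_ne_zero |>.mp this]
  · obtain rfl : a = 2 := by linarith
    obtain rfl : p = -2 := by linarith
    have := eval_eq 1
    norm_num at this
  · obtain rfl : a = -1 := by linarith
    obtain rfl : p = 2 := by linarith
    have h3 := eval_eq 3
    norm_num at h3
    have : (lam + 1) * (lam - 2) = 0 := by linear_combination h3 / 6
    rcases mul_eq_zero.mp this with h | h
    · left; linarith
    · right; right; linarith

/-- If some derivation of the filiform Lie algebra `n₄` has characteristic polynomial
`X * (X - 1) * (X - λ) * (X - (1 - λ))`, then `λ ∈ {-1, 1/2, 2}`. -/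
theorem charpoly_derivation_n4_d4_lambda (lam : ℝ)
    (h : ∃ D : LieDerivation ℝ N4 N4,
      LinearMap.charpoly D.toLinearMap
        = X * (X - 1) * (X - C lam) * (X - C (1 - lam))) :
    lam = -1 ∨ lam = 1 / 2 ∨ lam = 2 := by
  obtain ⟨D, hD⟩ := h
  exact eq_neg_one_or_eq_half_or_eq_two_of_charpoly_eq ((N4.charpoly_derivation D).symm.trans hD)
end
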